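/- Let G be a finite simple graph with m > 0 edges, and let S and S* be finite sets of vertices of G with CM(S) > 0. If DM(S ∪ S*) ≥ DM(S), then CM(S ∪ S*) ≥ CM(S). (Whenever density modularity suffers from the free-rider effect — i.e., the merged set S ∪ S* has density modularity at least that of S — the classic modularity suffers from the free-rider effect as well.) -/

import Mathlib

open Finset

/-- Number of edges of `G` with both endpoints in `C`. -/
noncomputable def numEdgesIn {V : Type*} [Fintype V] [DecidableEq V]
    (G : SimpleGraph V) [DecidableRel G.Adj] (C : Finset V) : ℕ :=
  (G.edgeFinset.filter fun e => ∀ v ∈ e, v ∈ C).card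

/-- Sum over `C` of the degrees taken in `G`. -/
def degSum {V : Type*} [Fintype V] [DecidableEq V]
    (G : SimpleGraph V) [DecidableRel G.Adj] (C : Finset V) : ℕ :=
  ∑ v ∈ C, G.degree v

/-- Classic modularity. -/
noncomputable def CM {V : Type*} [Fintype V] [DecidableEq V]
    (G : SimpleGraph V) [DecidableRel G.Adj] (C : Finset V) : ℝ :=
  (1 / (2 * (G.edgeFinset.card : ℝ))) *
    (2 * (numEdgesIn G C : ℝ) -
      (degSum G C : ℝ) ^ 2 / (2 * (G.edgeFinset.card : ℝ)))

/-- Density modularity. -/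
noncomputable def DM {V : Type*} [Fintype V] [DecidableEq V]
    (G : SimpleGraph V) [DecidableRel G.Adj] (C : Finset V) : ℝ :=
  (1 / (2 * (C.card : ℝ))) *
    (2 * (numEdgesIn G C : ℝ) -
      (degSum G C : ℝ) ^ 2 / (2 * (G.edgeFinset.card : ℝ)))

/-! CM and DM share the numerator `2 l_C - d_C² / (2m)` and differ only in its normalisation,
by `2m` and by `2|C|`. A positive CM makes the numerator of `S` positive and `S` nonempty; since
`|S| ≤ |S ∪ S*|`, the DM inequality then forces the numerator of `S ∪ S*` to be at least that of
`S`, and dividing both by `2m` gives the CM inequality. -/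

theorem le_of_div_le_div_of_le_of_nonneg {K : Type*} [Field K] [LinearOrder K] [IsStrictOrderedRing K]
    {a b s u : K} (ha : 0 ≤ a) (hs : 0 < s) (hsu : s ≤ u) (h : a / s ≤ b / u) : a ≤ b :=
  (div_le_div_iff_of_pos_right (hs.trans_le hsu)).mp <|
    (div_le_div_of_nonneg_left ha hs hsu).trans h

section Modularity

variable {V : Type*} [Fintype V] [DecidableEq V] (G : SimpleGraph V) [DecidableRel G.Adj]

noncomputable def modularityNumerator (C : Finset V) : ℝ :=
  2 * (numEdgesIn G C : ℝ) - (degSum G C : ℝ) ^ 2 / (2 * (G.edgeFinset.card : ℝ))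

theorem CM_eq_mul_modularityNumerator (C : Finset V) :
    CM G C = 1 / (2 * (G.edgeFinset.card : ℝ)) * modularityNumerator G C :=
  rfl

theorem DM_eq_modularityNumerator_div (C : Finset V) :
    DM G C = modularityNumerator G C / (2 * (C.card : ℝ)) :=
  one_div_mul_eq_div _ _

@[simp]
theorem numEdgesIn_empty : numEdgesIn G ∅ = 0 := by
  refine card_eq_zero.mpr (filter_false_of_mem fun e _ hall => ?_)
  exact notMem_empty _ (hall _ (Sym2.out_fst_mem e))

@[simp]
theorem degSum_empty : degSum G ∅ = 0 :=
  sum_empty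

theorem CM_empty : CM G ∅ = 0 := by
  simp [CM]

theorem CM_le_CM_of_modularityNumerator_le {C D : Finset V}
    (h : modularityNumerator G C ≤ modularityNumerator G D) : CM G C ≤ CM G D := by
  simp only [CM_eq_mul_modularityNumerator]
  exact mul_le_mul_of_nonneg_left h (by positivity)

theorem modularityNumerator_pos_of_CM_pos {C : Finset V} (h : 0 < CM G C) :
    0 < modularityNumerator G C := by
  rw [CM_eq_mul_modularityNumerator] at h
  exact pos_of_mul_pos_right h (by positivity)

theorem nonempty_of_CM_pos {C : Finset V} (h : 0 < CM G C) : C.Nonempty := by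
  rw [nonempty_iff_ne_empty]
  rintro rfl
  exact h.ne' (CM_empty G)

theorem modularityNumerator_le_of_DM_le {C D : Finset V} (hC : C.Nonempty) (hCD : C ⊆ D)
    (hnum : 0 ≤ modularityNumerator G C) (h : DM G C ≤ DM G D) :
    modularityNumerator G C ≤ modularityNumerator G D := by
  rw [DM_eq_modularityNumerator_div, DM_eq_modularityNumerator_div] at h
  refine le_of_div_le_div_of_le_of_nonneg hnum (by positivity) ?_ h
  gcongr

end Modularity

theorem dm_free_rider_implies_cm_free_rider_general
    {V : Type*} [Fintype V] [DecidableEq V]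
    (G : SimpleGraph V) [DecidableRel G.Adj]
    (S Sstar : Finset V)
    (hCM : 0 < CM G S)
    (h : DM G S ≤ DM G (S ∪ Sstar)) :
    CM G S ≤ CM G (S ∪ Sstar) :=
  CM_le_CM_of_modularityNumerator_le G <|
    modularityNumerator_le_of_DM_le G (nonempty_of_CM_pos G hCM) subset_union_left
      (modularityNumerator_pos_of_CM_pos G hCM).le h

/-- Whenever density modularity suffers from the free-rider effect,
the classic modularity suffers from the free-rider effect as well. -/
theorem dm_free_rider_implies_cm_free_rider
    {V : Type*} [Fintype V] [DecidableEq V]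
    (G : SimpleGraph V) [DecidableRel G.Adj]
    (S Sstar : Finset V)
    (hm : 0 < G.edgeFinset.card)
    (hCM : 0 < CM G S)
    (h : DM G S ≤ DM G (S ∪ Sstar)) :
    CM G S ≤ CM G (S ∪ Sstar) :=
  dm_free_rider_implies_cm_free_rider_general G S Sstar hCM h
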